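/- arXiv:1210.2442 — 2 statements merged into one kernel-verified Lean document; each statement's English description precedes it below -/
import Mathlib

section
/- Let n ≥ 2, let w_1, …, w_n ∈ ℝ² satisfy [w_1, w_i] > 0 for all 2 ≤ i ≤ n, and let α_1, …, α_n be real numbers with α_i > 1 for all i. Then Σ_{i=1}^n w_i ≠ Σ_{i=1}^n α_i w_i. -/
open scoped BigOperators

/-- `det2 v w` is the determinant of the 2×2 matrix with columns `v, w ∈ ℝ²`. -/
noncomputable def det2 (v w : ℝ × ℝ) : ℝ := v.1 * w.2 - v.2 * w.1

/-!
Apply the linear functional `[w₁, ·]` to `Σ wᵢ = Σ αᵢ wᵢ`: this gives `Σ (αᵢ - 1) [w₁, wᵢ] = 0`.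
Every term is nonnegative (the `i = 1` term vanishes) and the `i = 2` term is positive.
-/

theorem Finset.sum_ne_sum_smul_of_map_nonneg {ι 𝕜 M : Type*} [Field 𝕜] [LinearOrder 𝕜]
    [IsStrictOrderedRing 𝕜] [AddCommGroup M] [Module 𝕜 M] (f : M →ₗ[𝕜] 𝕜) {s : Finset ι}
    {w : ι → M} {α : ι → 𝕜} (hα : ∀ i ∈ s, 1 ≤ α i) (hf : ∀ i ∈ s, 0 ≤ f (w i))
    {j : ι} (hj : j ∈ s) (hαj : 1 < α j) (hfj : 0 < f (w j)) :
    ∑ i ∈ s, w i ≠ ∑ i ∈ s, α i • w i := by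
  intro h
  have hzero : ∑ i ∈ s, (α i - 1) * f (w i) = 0 :=
    calc ∑ i ∈ s, (α i - 1) * f (w i)
        = f (∑ i ∈ s, α i • w i) - f (∑ i ∈ s, w i) := by
          simp only [map_sum, map_smul, smul_eq_mul, sub_mul, one_mul, Finset.sum_sub_distrib]
      _ = 0 := by rw [h, sub_self]
  have hpos : 0 < ∑ i ∈ s, (α i - 1) * f (w i) :=
    Finset.sum_pos' (fun i hi => mul_nonneg (sub_nonneg.2 (hα i hi)) (hf i hi))
      ⟨j, hj, mul_pos (sub_pos.2 hαj) hfj⟩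
  exact hpos.ne' hzero

noncomputable def det2Linear (v : ℝ × ℝ) : ℝ × ℝ →ₗ[ℝ] ℝ :=
  v.1 • LinearMap.snd ℝ ℝ ℝ - v.2 • LinearMap.fst ℝ ℝ ℝ

@[simp]
theorem det2Linear_apply (v w : ℝ × ℝ) : det2Linear v w = det2 v w := rfl

@[simp]
theorem det2_self (v : ℝ × ℝ) : det2 v v = 0 := by
  rw [det2]
  ring

/-- If `n ≥ 2`, `[w₁, wᵢ] > 0` for `2 ≤ i ≤ n`, and `αᵢ > 1` for
`1 ≤ i ≤ n`, then `Σ wᵢ ≠ Σ αᵢ wᵢ`. -/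
theorem statement4 {n : ℕ} (hn : 2 ≤ n) (w : ℕ → ℝ × ℝ) (α : ℕ → ℝ)
    (hw : ∀ i : ℕ, 2 ≤ i → i ≤ n → 0 < det2 (w 1) (w i))
    (hα : ∀ i : ℕ, 1 ≤ i → i ≤ n → 1 < α i) :
    ∑ i ∈ Finset.Icc 1 n, w i ≠ ∑ i ∈ Finset.Icc 1 n, α i • w i := by
  have hdet : ∀ i ∈ Finset.Icc 1 n, 0 ≤ det2Linear (w 1) (w i) := by
    intro i hi
    obtain ⟨h1i, hin⟩ := Finset.mem_Icc.1 hi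
    obtain rfl | h2i := h1i.eq_or_lt
    · simp
    · exact (hw i h2i hin).le
  exact Finset.sum_ne_sum_smul_of_map_nonneg (det2Linear (w 1))
    (fun i hi => (hα i (Finset.mem_Icc.1 hi).1 (Finset.mem_Icc.1 hi).2).le) hdet
    (Finset.mem_Icc.2 ⟨one_le_two, hn⟩) (hα 2 one_le_two hn) (hw 2 le_rfl hn)
end

section
/- Let P be a CPOS polygon. Set M_i := (P_i + P_{i+n})/2, v(i+1/2) := M_{i+1} − M_i and u_i := P_i − M_i (so u_{i+n} = −u_i and v(i+n+1/2) = v(i+1/2)). Let A¹ be the signed area of the polygon with vertices P_1, P_2, …, P_{n+1} and A² the signed area of the polygon with vertices P_{n+1}, P_{n+2}, …, P_{2n}, P_1 (the two regions into which the great diagonal d_1 divides P), where the signed area of a polygon with vertices X_1, …, X_m (indices mod m) is (1/2)Σ_{k=1}^m [X_k, X_{k+1}]. Then A² − A¹ = 2 Σ_{j=1}^n [v(j+1/2), u_j]. -/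
open scoped BigOperators Classical

/-- A convex polygon with parallel opposite sides (CPOS polygon): vertices `P i`, `i : ℤ`,
periodic with period `2n`; the side vectors `e(i+1/2) = P(i+1) - P i` satisfy
`e(i+n+1/2) ∥ e(i+1/2)`, no two adjacent sides are parallel, and the polygon is
positively oriented: `[e(i+1/2), e(j+1/2)] > 0` for `1 ≤ i < j ≤ n`. -/
structure CPOS (n : ℕ) : Type where
  P : ℤ → ℝ × ℝ
  hn : 2 ≤ n
  periodic : ∀ i : ℤ, P (i + 2 * (n : ℤ)) = P i
  parallel : ∀ i : ℤ, ∃ t : ℝ, P (i + (n : ℤ) + 1) - P (i + (n : ℤ)) = t • (P (i + 1) - P i)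
  adj_not_parallel : ∀ i : ℤ, det2 (P (i + 1) - P i) (P (i + 2) - P (i + 1)) ≠ 0
  oriented : ∀ i j : ℤ, 1 ≤ i → i < j → j ≤ (n : ℤ) →
    0 < det2 (P (i + 1) - P i) (P (j + 1) - P j)

/-- `onDiag P n i x` : the point `x` lies on the great diagonal `d_i`,
the line through `P i` and `P (i+n)`. -/
def onDiag (P : ℤ → ℝ × ℝ) (n : ℕ) (i : ℤ) (x : ℝ × ℝ) : Prop :=
  ∃ t : ℝ, x = P i + t • (P (i + (n : ℤ)) - P i)

/-- `Mpt C i` is the midpoint `M_i = (P_i + P_{i+n})/2` of the great diagonal `d_i`. -/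
noncomputable def Mpt {n : ℕ} (C : CPOS n) (i : ℤ) : ℝ × ℝ :=
  (1 / 2 : ℝ) • (C.P i + C.P (i + (n : ℤ)))

/-- `vvec C i` is `v(i+1/2) = M_{i+1} - M_i`. -/
noncomputable def vvec {n : ℕ} (C : CPOS n) (i : ℤ) : ℝ × ℝ := Mpt C (i + 1) - Mpt C i

/-- `uvec C i` is `u_i = P_i - M_i`. -/
noncomputable def uvec {n : ℕ} (C : CPOS n) (i : ℤ) : ℝ × ℝ := C.P i - Mpt C i

/-!
Write `p, q, r, s` for `P_j, P_{j+1}, P_{j+n}, P_{j+n+1}`. Expanding `2 [v(j+1/2), u_j]` by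
bilinearity gives `([r, s] - [p, q])/2 - ([q, s] - [p, r])/2 + [q - p, s - r]/2`, and the last
term vanishes because opposite sides are parallel. Summing over `j = 1, …, n`, the first part
gives half the difference of the boundary sums of the two halves, and the second telescopes to
`[P_1, P_{n+1}]`, since `[P_{n+1}, P_{2n+1}] = [P_{n+1}, P_1] = -[P_1, P_{n+1}]` by periodicity.
This is exactly the contribution of the diagonal `d_1` to `A² - A¹`.
-/

open Finset

section Intervals

variable {M : Type*} [AddCommMonoid M]

lemma Finset.sum_Icc_add_right (f : ℤ → M) (a b c : ℤ) :
    ∑ k ∈ Icc (a + c) (b + c), f k = ∑ k ∈ Icc a b, f (k + c) := by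
  rw [← map_add_right_Icc, sum_map]; rfl

lemma Finset.sum_Icc_sub_telescope {G : Type*} [AddCommGroup G] (f : ℤ → G) {a b : ℤ}
    (h : a ≤ b) : ∑ k ∈ Icc a b, (f (k + 1) - f k) = f (b + 1) - f a := by
  induction b, h using Int.leInduction with
  | base => simp
  | succ b hab ih =>
    rw [← insert_Icc_right_eq_Icc_add_one (by omega), sum_insert (by simp), ih]
    abel

end Intervals

section Det2

lemma det2_swap (v w : ℝ × ℝ) : det2 w v = -det2 v w := by
  simp only [det2]; ring

lemma det2_eq_zero_of_eq_smul {v w : ℝ × ℝ} {t : ℝ} (h : w = t • v) : det2 v w = 0 := by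
  simp only [det2, h, Prod.smul_fst, Prod.smul_snd, smul_eq_mul]; ring

lemma two_mul_det2_midpoints (p q r s : ℝ × ℝ) :
    2 * det2 ((1 / 2 : ℝ) • (q + s) - (1 / 2 : ℝ) • (p + r)) (p - (1 / 2 : ℝ) • (p + r))
      = (1 / 2) * (det2 r s - det2 p q) - (1 / 2) * (det2 q s - det2 p r)
        + (1 / 2) * det2 (q - p) (s - r) := by
  simp only [det2, Prod.fst_sub, Prod.snd_sub, Prod.fst_add, Prod.snd_add, Prod.smul_fst,
    Prod.smul_snd, smul_eq_mul]
  ring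

end Det2

namespace CPOS

variable {n : ℕ} (C : CPOS n)

lemma det2_side_opposite_side (j : ℤ) :
    det2 (C.P (j + 1) - C.P j) (C.P (j + n + 1) - C.P (j + n)) = 0 := by
  obtain ⟨t, ht⟩ := C.parallel j
  exact det2_eq_zero_of_eq_smul ht

lemma two_mul_det2_vvec_uvec (j : ℤ) :
    2 * det2 (vvec C j) (uvec C j)
      = (1 / 2) * (det2 (C.P (j + n)) (C.P (j + n + 1)) - det2 (C.P j) (C.P (j + 1)))
        - (1 / 2) * (det2 (C.P (j + 1)) (C.P (j + 1 + n)) - det2 (C.P j) (C.P (j + n))) := by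
  rw [vvec, uvec, Mpt, Mpt, add_right_comm j 1, two_mul_det2_midpoints,
    C.det2_side_opposite_side, mul_zero, add_zero]

lemma two_mul_sum_det2_vvec_uvec :
    2 * ∑ j ∈ Icc (1 : ℤ) n, det2 (vvec C j) (uvec C j)
      = (1 / 2) * ∑ j ∈ Icc (1 : ℤ) n,
          (det2 (C.P (j + n)) (C.P (j + n + 1)) - det2 (C.P j) (C.P (j + 1)))
        + det2 (C.P 1) (C.P (n + 1)) := by
  have hn : (1 : ℤ) ≤ n := by have := C.hn; omega
  have hwrap : C.P (n + 1 + n) = C.P 1 := by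
    rw [show (n : ℤ) + 1 + n = 1 + 2 * n by ring, C.periodic]
  rw [mul_sum, sum_congr rfl fun j _ => C.two_mul_det2_vvec_uvec j, sum_sub_distrib,
    ← mul_sum, ← mul_sum,
    sum_Icc_sub_telescope (fun j => det2 (C.P j) (C.P (j + n))) hn, hwrap,
    det2_swap (C.P 1), add_comm 1 (n : ℤ)]
  ring

lemma sum_det2_upper_half :
    ∑ k ∈ Icc ((n : ℤ) + 1) (2 * n - 1), det2 (C.P k) (C.P (k + 1))
        + det2 (C.P (2 * n)) (C.P 1)
      = ∑ j ∈ Icc (1 : ℤ) n, det2 (C.P (j + n)) (C.P (j + n + 1)) := by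
  have hn : (n : ℤ) + 1 ≤ 2 * n := by have := C.hn; omega
  have hwrap : C.P (2 * n + 1) = C.P 1 := by rw [add_comm, C.periodic]
  rw [← hwrap, ← sum_Icc_add_right (fun k => det2 (C.P k) (C.P (k + 1))),
    show (1 : ℤ) + n = n + 1 by ring, show (n : ℤ) + n = 2 * n by ring,
    ← insert_Icc_sub_one_right_eq_Icc hn, sum_insert (by simp), add_comm]

end CPOS

/-- For a CPOS polygon, let `A¹` be the signed area of the polygon
`P_1, …, P_{n+1}` and `A²` the signed area of the polygon `P_{n+1}, …, P_{2n}, P_1`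
(the two regions into which the great diagonal `d_1` divides `P`), where the signed area
of `X_1, …, X_m` is `(1/2)Σ [X_k, X_{k+1}]` (indices mod `m`). Then
`A² - A¹ = 2 Σ_{j=1}^n [v(j+1/2), u_j]`. -/
theorem statement9 {n : ℕ} (C : CPOS n) :
    (1 / 2 : ℝ) * ((∑ k ∈ Finset.Icc ((n : ℤ) + 1) (2 * (n : ℤ) - 1),
          det2 (C.P k) (C.P (k + 1)))
        + det2 (C.P (2 * (n : ℤ))) (C.P 1) + det2 (C.P 1) (C.P ((n : ℤ) + 1)))
      - (1 / 2 : ℝ) * ((∑ k ∈ Finset.Icc (1 : ℤ) (n : ℤ), det2 (C.P k) (C.P (k + 1)))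
        + det2 (C.P ((n : ℤ) + 1)) (C.P 1))
    = 2 * ∑ j ∈ Finset.Icc (1 : ℤ) (n : ℤ), det2 (vvec C j) (uvec C j) := by
  rw [C.sum_det2_upper_half, C.two_mul_sum_det2_vvec_uvec, sum_sub_distrib,
    det2_swap (C.P _) (C.P 1)]
  ring
end
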